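/- (Gowers–Cauchy–Schwarz inequality) If f_ω : Z/NZ → ℝ for ω ∈ {0,1}^d are 2^d functions, then |E( ∏_{ω∈{0,1}^d} f_ω(x + ω·t) | x ∈ Z/NZ, t ∈ (Z/NZ)^d )| ≤ ∏_{ω∈{0,1}^d} ‖f_ω‖_{U^d}. -/
import Mathlib


/-- `‖f‖_{U^d}^{2^d}`, the closed-formula Gowers quantity. -/
noncomputable def gowersPow (N : ℕ) [NeZero N] (d : ℕ) (f : ZMod N → ℝ) : ℝ :=
  (∑ x : ZMod N, ∑ t : Fin d → ZMod N,
    ∏ ω : Fin d → Bool, f (x + ∑ j, if ω j then t j else 0)) / ((N : ℝ) * (N : ℝ) ^ d)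

/-- The Gowers uniformity norm `‖f‖_{U^d}`. -/
noncomputable def gowersNorm (N : ℕ) [NeZero N] (d : ℕ) (f : ZMod N → ℝ) : ℝ :=
  gowersPow N d f ^ ((1 : ℝ) / 2 ^ d)

section GCSAux

open Finset

variable (N : ℕ) [NeZero N] (d : ℕ)

/-- Gowers inner sum of a family. -/
noncomputable def gS (f : (Fin d → Bool) → ZMod N → ℝ) : ℝ :=
  ∑ x : ZMod N, ∑ t : Fin d → ZMod N,
    ∏ ω : Fin d → Bool, f ω (x + ∑ j, if ω j then t j else 0)

noncomputable def gT (i : Fin d) (b : Bool) (f : (Fin d → Bool) → ZMod N → ℝ)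
    (t : Fin d → ZMod N) : ℝ :=
  ∑ x : ZMod N, ∏ ω ∈ univ.filter (fun ω : Fin d → Bool => ω i = b),
    f ω (x + ∑ j, if ω j then t j else 0)

def eqv (i : Fin d) : ({t : Fin d → ZMod N // t i = 0} × ZMod N) ≃ (Fin d → ZMod N) where
  toFun p := Function.update p.1.val i p.2
  invFun t := (⟨Function.update t i 0, by simp⟩, t i)
  left_inv := by
    rintro ⟨⟨t₀, ht₀⟩, s⟩
    refine Prod.ext (Subtype.ext (funext fun j => ?_)) (by simp)
    by_cases h : j = i
    · subst h; simp [ht₀]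
    · simp [Function.update_apply, h]
  right_inv := by
    intro t
    funext j
    by_cases h : j = i
    · subst h; simp
    · simp [Function.update_apply, h]

lemma gS_split (i : Fin d) (f : (Fin d → Bool) → ZMod N → ℝ) :
    gS N d f = ∑ t ∈ univ.filter (fun t : Fin d → ZMod N => t i = 0),
      gT N d i false f t * gT N d i true f t := by
  classical
  have key : ∀ x : ZMod N, ∑ t : Fin d → ZMod N,
      ∏ ω : Fin d → Bool, f ω (x + ∑ j, if ω j then t j else 0)
      = ∑ t₀ : {t : Fin d → ZMod N // t i = 0}, ∑ s : ZMod N,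
        (∏ ω ∈ univ.filter (fun ω : Fin d → Bool => ω i = false),
          f ω (x + ∑ j, if ω j then t₀.val j else 0)) *
        (∏ ω ∈ univ.filter (fun ω : Fin d → Bool => ω i = true),
          f ω ((x + s) + ∑ j, if ω j then t₀.val j else 0)) := by
    intro x
    rw [← Equiv.sum_comp (eqv N d i)
      (fun t => ∏ ω : Fin d → Bool, f ω (x + ∑ j, if ω j then t j else 0)),
      Fintype.sum_prod_type]
    refine Fintype.sum_congr _ _ fun t₀ => Fintype.sum_congr _ _ fun s => ?_
    have heq : (eqv N d i) (t₀, s) = Function.update t₀.val i s := rfl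
    rw [heq]
    have hdot0 : ∀ ω : Fin d → Bool, ω i = false →
        (∑ j, if ω j then Function.update t₀.val i s j else 0)
          = ∑ j, if ω j then t₀.val j else 0 := by
      intro ω hω
      refine Finset.sum_congr rfl fun j _ => ?_
      by_cases h : j = i
      · subst h; simp [hω]
      · simp [Function.update_apply, h]
    have hdot1 : ∀ ω : Fin d → Bool, ω i = true →
        (∑ j, if ω j then Function.update t₀.val i s j else 0)
          = s + ∑ j, if ω j then t₀.val j else 0 := by
      intro ω hω
      have hterm : ∀ j, (if ω j then Function.update t₀.val i s j else 0)
          = (if j = i then s else 0) + (if ω j then t₀.val j else 0) := by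
        intro j
        by_cases h : j = i
        · subst h; simp [hω, t₀.prop]
        · simp [Function.update_apply, h]
      rw [Finset.sum_congr rfl fun j _ => hterm j, Finset.sum_add_distrib,
        Finset.sum_ite_eq' univ i fun _ => s]
      simp
    rw [← Finset.prod_filter_mul_prod_filter_not univ (fun ω : Fin d → Bool => ω i = false)]
    have hfil : univ.filter (fun ω : Fin d → Bool => ¬ ω i = false)
        = univ.filter (fun ω : Fin d → Bool => ω i = true) := by
      ext ω; simp
    rw [hfil]
    congr 1
    · exact Finset.prod_congr rfl fun ω hω => by
        rw [hdot0 ω (by simpa using hω)]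
    · refine Finset.prod_congr rfl fun ω hω => ?_
      rw [hdot1 ω (by simpa using hω), ← add_assoc]
  unfold gS
  rw [Finset.sum_congr rfl fun x _ => key x, Finset.sum_comm]
  rw [Finset.sum_subtype (p := fun t : Fin d → ZMod N => t i = 0)
    (univ.filter (fun t : Fin d → ZMod N => t i = 0))
    (fun t => by simp) (fun t => gT N d i false f t * gT N d i true f t)]
  refine Fintype.sum_congr _ _ fun t₀ => ?_
  unfold gT
  rw [Finset.sum_mul]
  refine Fintype.sum_congr _ _ fun x => ?_
  rw [← Finset.mul_sum]
  congr 1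
  rw [← Equiv.sum_comp (Equiv.addLeft x) (fun y => ∏ ω ∈ univ.filter
    (fun ω : Fin d → Bool => ω i = true), f ω (y + ∑ j, if ω j then t₀.val j else 0))]
  rfl

lemma gT_update (i : Fin d) (b c : Bool) (f : (Fin d → Bool) → ZMod N → ℝ)
    (t : Fin d → ZMod N) (ht : t i = 0) :
    gT N d i c (fun ω => f (Function.update ω i b)) t = gT N d i b f t := by
  classical
  unfold gT
  refine Fintype.sum_congr _ _ fun x => ?_
  refine Finset.prod_bij' (fun ω _ => Function.update ω i b)
    (fun ω _ => Function.update ω i c) ?_ ?_ ?_ ?_ ?_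
  · intro ω hω; simp
  · intro ω hω; simp
  · intro ω hω
    funext j
    by_cases h : j = i
    · subst h; simpa using ((Finset.mem_filter.mp hω).2).symm
    · simp [Function.update_apply, h]
  · intro ω hω
    funext j
    by_cases h : j = i
    · subst h; simpa using ((Finset.mem_filter.mp hω).2).symm
    · simp [Function.update_apply, h]
  · intro ω hω
    congr 2
    refine Finset.sum_congr rfl fun j _ => ?_
    by_cases h : j = i
    · subst h; simp [ht]
    · simp [Function.update_apply, h]

lemma gS_update (i : Fin d) (b : Bool) (f : (Fin d → Bool) → ZMod N → ℝ) :
    gS N d (fun ω => f (Function.update ω i b))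
      = ∑ t ∈ univ.filter (fun t : Fin d → ZMod N => t i = 0), (gT N d i b f t) ^ 2 := by
  rw [gS_split N d i]
  refine Finset.sum_congr rfl fun t ht => ?_
  have ht' : t i = 0 := by simpa using ht
  rw [gT_update N d i b false f t ht', gT_update N d i b true f t ht', sq]

lemma gS_update_nonneg (i : Fin d) (b : Bool) (f : (Fin d → Bool) → ZMod N → ℝ) :
    0 ≤ gS N d (fun ω => f (Function.update ω i b)) := by
  rw [gS_update]
  exact Finset.sum_nonneg fun t _ => sq_nonneg _

lemma gS_const_nonneg (hd : 1 ≤ d) (g : ZMod N → ℝ) :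
    0 ≤ gS N d (fun _ => g) := by
  have := gS_update_nonneg N d ⟨0, hd⟩ false (fun _ => g)
  simpa using this

lemma gS_cs (i : Fin d) (f : (Fin d → Bool) → ZMod N → ℝ) :
    |gS N d f| ≤ Real.sqrt (gS N d (fun ω => f (Function.update ω i false)))
      * Real.sqrt (gS N d (fun ω => f (Function.update ω i true))) := by
  have hsq : (gS N d f) ^ 2 ≤ gS N d (fun ω => f (Function.update ω i false))
      * gS N d (fun ω => f (Function.update ω i true)) := by
    rw [gS_split N d i f, gS_update N d i false f, gS_update N d i true f]
    exact Finset.sum_mul_sq_le_sq_mul_sq _ _ _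
  calc |gS N d f| = Real.sqrt ((gS N d f) ^ 2) := (Real.sqrt_sq_eq_abs _).symm
    _ ≤ Real.sqrt (gS N d (fun ω => f (Function.update ω i false))
        * gS N d (fun ω => f (Function.update ω i true))) := Real.sqrt_le_sqrt hsq
    _ = _ := Real.sqrt_mul (gS_update_nonneg N d i false f) _

lemma prod_update_cube (i : Fin d) (b : Bool) (X : (Fin d → Bool) → ℝ) :
    ∏ ω : Fin d → Bool, X (Function.update ω i b)
      = (∏ ω ∈ univ.filter (fun ω : Fin d → Bool => ω i = b), X ω) ^ 2 := by
  classical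
  rw [← Finset.prod_filter_mul_prod_filter_not univ (fun ω : Fin d → Bool => ω i = b)
    (fun ω => X (Function.update ω i b)), sq]
  congr 1
  · refine Finset.prod_congr rfl fun ω hω => ?_
    have : ω i = b := by simpa using hω
    rw [← this, Function.update_eq_self]
  · refine Finset.prod_bij' (fun ω _ => Function.update ω i b)
      (fun ω _ => Function.update ω i (!b)) ?_ ?_ ?_ ?_ ?_
    · intro ω hω; simp
    · intro ω hω; simp
    · intro ω hω
      have hno : ¬ ω i = b := by simpa using hω
      funext j
      by_cases h : j = i
      · subst h
        simp only [Function.update_self]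
        cases hb : ω j <;> cases b <;> simp_all
      · simp [Function.update_apply, h]
    · intro ω hω
      have : ω i = b := by simpa using hω
      funext j
      by_cases h : j = i
      · subst h; simp [this]
      · simp [Function.update_apply, h]
    · intro ω hω; rfl

lemma gcs_main (n : ℕ) : ∀ (K : Finset (Fin d)), K.card = n →
    ∀ f : (Fin d → Bool) → ZMod N → ℝ,
    (∀ ω ω' : Fin d → Bool, (∀ i ∈ K, ω i = ω' i) → f ω = f ω') →
    |gS N d f| ≤ ∏ ω : Fin d → Bool, |gS N d (fun _ => f ω)| ^ ((1:ℝ)/2^d) := by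
  induction n with
  | zero =>
    intro K hK f hf
    have hK0 : K = ∅ := Finset.card_eq_zero.mp hK
    subst hK0
    have hconst : ∀ ω : Fin d → Bool, (fun _ : Fin d → Bool => f ω) = f := by
      intro ω; funext ω'
      exact (hf ω' ω (fun i hi => by simp at hi)).symm
    have hprod : ∏ ω : Fin d → Bool, |gS N d (fun _ => f ω)| ^ ((1:ℝ)/2^d)
        = (|gS N d f| ^ ((1:ℝ)/2^d)) ^ (2^d : ℕ) := by
      rw [Finset.prod_congr rfl (fun ω _ => by rw [hconst ω] :
        ∀ ω ∈ (univ : Finset (Fin d → Bool)),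
          |gS N d (fun _ => f ω)| ^ ((1:ℝ)/2^d) = |gS N d f| ^ ((1:ℝ)/2^d)),
        Finset.prod_const]
      simp [Fintype.card_fun]
    rw [hprod, ← Real.rpow_natCast (|gS N d f| ^ ((1:ℝ)/2^d)) (2^d),
      ← Real.rpow_mul (abs_nonneg _)]
    norm_num
  | succ n ih =>
    intro K hK f hf
    have hKne : K.Nonempty := Finset.card_pos.mp (by omega)
    obtain ⟨i, hi⟩ := hKne
    set X : (Fin d → Bool) → ℝ := fun ω => |gS N d (fun _ => f ω)| ^ ((1:ℝ)/2^d) with hX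
    have hXnn : ∀ ω, 0 ≤ X ω := fun ω => Real.rpow_nonneg (abs_nonneg _) _
    have hIH : ∀ b : Bool, |gS N d (fun ω => f (Function.update ω i b))|
        ≤ (∏ ω ∈ univ.filter (fun ω : Fin d → Bool => ω i = b), X ω) ^ 2 := by
      intro b
      have hK' : (K.erase i).card = n := by rw [Finset.card_erase_of_mem hi, hK]; omega
      have := ih (K.erase i) hK' (fun ω => f (Function.update ω i b)) ?_
      · calc |gS N d (fun ω => f (Function.update ω i b))|
            ≤ ∏ ω : Fin d → Bool,
              |gS N d (fun _ => f (Function.update ω i b))| ^ ((1:ℝ)/2^d) := this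
          _ = ∏ ω : Fin d → Bool, X (Function.update ω i b) := rfl
          _ = _ := by exact prod_update_cube d i b X
      · intro ω ω' hagree
        refine hf _ _ fun j hj => ?_
        by_cases h : j = i
        · subst h; simp
        · rw [Function.update_apply, Function.update_apply, if_neg h, if_neg h]
          exact hagree j (Finset.mem_erase.mpr ⟨h, hj⟩)
    set P : Bool → ℝ := fun b => ∏ ω ∈ univ.filter (fun ω : Fin d → Bool => ω i = b), X ω
      with hP
    have hPnn : ∀ b, 0 ≤ P b := fun b => Finset.prod_nonneg fun ω _ => hXnn ω
    have hsqrt : ∀ b : Bool,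
        Real.sqrt (gS N d (fun ω => f (Function.update ω i b))) ≤ P b := by
      intro b
      have h1 : gS N d (fun ω => f (Function.update ω i b)) ≤ (P b) ^ 2 := by
        calc gS N d (fun ω => f (Function.update ω i b))
            ≤ |gS N d (fun ω => f (Function.update ω i b))| := le_abs_self _
          _ ≤ (P b) ^ 2 := hIH b
      calc Real.sqrt (gS N d (fun ω => f (Function.update ω i b)))
          ≤ Real.sqrt ((P b) ^ 2) := Real.sqrt_le_sqrt h1
        _ = P b := by rw [Real.sqrt_sq (hPnn b)]
    calc |gS N d f|
        ≤ Real.sqrt (gS N d (fun ω => f (Function.update ω i false)))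
          * Real.sqrt (gS N d (fun ω => f (Function.update ω i true))) := gS_cs N d i f
      _ ≤ P false * P true := by
          exact mul_le_mul (hsqrt false) (hsqrt true) (Real.sqrt_nonneg _) (hPnn false)
      _ = ∏ ω : Fin d → Bool, X ω := by
          rw [hP]
          rw [← Finset.prod_filter_mul_prod_filter_not univ
            (fun ω : Fin d → Bool => ω i = false) X]
          congr 1
          apply Finset.prod_congr _ fun _ _ => rfl
          ext ω; simp


end GCSAux

/-- The Gowers–Cauchy–Schwarz inequality: for a family `f_ω`, `ω ∈ {0,1}^d`, of
`2^d` real functions on `Z/NZ`,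
`|E(∏_ω f_ω(x + ω·t) | x, t)| ≤ ∏_ω ‖f_ω‖_{U^d}`. -/
theorem gowers_cauchy_schwarz (N : ℕ) [NeZero N] (d : ℕ) (hd : 1 ≤ d)
    (f : (Fin d → Bool) → ZMod N → ℝ) :
    |(∑ x : ZMod N, ∑ t : Fin d → ZMod N,
        ∏ ω : Fin d → Bool, f ω (x + ∑ j, if ω j then t j else 0)) /
      ((N : ℝ) * (N : ℝ) ^ d)| ≤ ∏ ω : Fin d → Bool, gowersNorm N d (f ω) := by
  have hN : (0:ℝ) < N := by exact_mod_cast Nat.pos_of_ne_zero (NeZero.ne N)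
  have hD : (0:ℝ) < (N : ℝ) * (N : ℝ) ^ d := by positivity
  set D : ℝ := (N:ℝ) * (N:ℝ)^d with hDdef
  have hcard : (Finset.univ : Finset (Fin d)).card = d := by simp
  have hmain := gcs_main N d d Finset.univ hcard f (fun ω ω' h => by
    have h2 : ω = ω' := funext fun i => h i (Finset.mem_univ i)
    rw [h2])
  have hnn : ∀ ω : Fin d → Bool, 0 ≤ gS N d (fun _ => f ω) :=
    fun ω => gS_const_nonneg N d hd (f ω)
  have hexp : ((1:ℝ)/2^d) * ((2^d : ℕ) : ℝ) = 1 := by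
    push_cast
    field_simp
  have hRHS : ∏ ω : Fin d → Bool, gowersNorm N d (f ω)
      = (∏ ω : Fin d → Bool, |gS N d (fun _ => f ω)| ^ ((1:ℝ)/2^d)) / D := by
    have hD' : ∏ _ω : Fin d → Bool, D ^ ((1:ℝ)/2^d) = D := by
      rw [Finset.prod_const, ← Real.rpow_natCast (D ^ ((1:ℝ)/2^d)) _,
        ← Real.rpow_mul hD.le]
      rw [show (Finset.univ : Finset (Fin d → Bool)).card = 2^d by simp [Fintype.card_fun]]
      rw [hexp, Real.rpow_one]
    rw [eq_div_iff hD.ne']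
    nth_rewrite 1 [show D = ∏ _ω : Fin d → Bool, D ^ ((1:ℝ)/2^d) from hD'.symm]
    rw [← Finset.prod_mul_distrib]
    refine Finset.prod_congr rfl fun ω _ => ?_
    show gowersNorm N d (f ω) * D ^ ((1:ℝ)/2^d) = |gS N d (fun _ => f ω)| ^ ((1:ℝ)/2^d)
    have hgp : gowersPow N d (f ω) = gS N d (fun _ => f ω) / D := rfl
    unfold gowersNorm
    rw [hgp, abs_of_nonneg (hnn ω), Real.div_rpow (hnn ω) hD.le,
      div_mul_cancel₀ _ (Real.rpow_pos_of_pos hD _).ne']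
  show |gS N d f / D| ≤ ∏ ω : Fin d → Bool, gowersNorm N d (f ω)
  rw [hRHS, abs_div, abs_of_pos hD]
  gcongr
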